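/- Let $\hat{W}_n = \sum_{j\geq 1} X_{n,j}/n$ with $X_{n,j}$ independent Binomial$(n,p_j)$ and $W = \sum_j p_j < \infty$. For all $\lambda \geq 0$, $\log \mathbb{E}\, e^{-\lambda(\hat{W}_n - W)} \leq \frac{\lambda^2 W}{2n}$, i.e. $\hat W_n$ is sub-Gaussian on the left tail with variance factor $W/n$. -/

import Mathlib

/-!
Each `X j` has Laplace transform `(1 + p_j (e^t - 1))^n ≤ exp (n p_j (e^t - 1))`, so by
independence the partial sums of `∑ X j` satisfy the Poisson-type bound
`E e^{t S_m} ≤ exp (n (e^t - 1) ∑_{j<m} p_j)` for `t ≤ 0`. Since `P(X j ≠ 0) ≤ n p_j` is summable,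
Borel–Cantelli makes `∑ X j` almost surely a finite sum, and dominated convergence passes the bound
to the limit. With `t = -λ/n` this gives `log E e^{-λ(Ŵ_n - W)} ≤ n W φ(-λ/n)`, where
`φ(t) = e^t - 1 - t`, and `φ(-x) ≤ x²/2` for `x ≥ 0`.
-/

open MeasureTheory ProbabilityTheory Real Filter Finset Topology
open scoped unitInterval ENNReal

lemma Real.exp_neg_sub_one_add_le {x : ℝ} (hx : 0 ≤ x) : exp (-x) - 1 + x ≤ x ^ 2 / 2 := by
  set g : ℝ → ℝ := fun y => exp (-y) - 1 + y - y ^ 2 / 2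
  have hg : ∀ y, HasDerivAt g (-exp (-y) + 1 - y) y := by
    intro y
    have hexp : HasDerivAt (fun y : ℝ => exp (-y)) (-exp (-y)) y := by
      simpa using (hasDerivAt_neg y).exp
    have hsq : HasDerivAt (fun y : ℝ => y ^ 2 / 2) y y := by
      simpa using (hasDerivAt_pow 2 y).div_const 2
    exact ((hexp.sub_const 1).add (hasDerivAt_id y)).sub hsq
  have hanti : AntitoneOn g (Set.Ici 0) := by
    refine antitoneOn_of_deriv_nonpos (convex_Ici 0)
      (fun y _ => (hg y).continuousAt.continuousWithinAt)
      (fun y _ => (hg y).differentiableAt.differentiableWithinAt) fun y _ => ?_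
    rw [(hg y).deriv]
    linarith [add_one_le_exp (-y)]
  have := hanti Set.self_mem_Ici hx hx
  simp only [g, neg_zero, exp_zero] at this
  linarith

lemma Real.log_le_of_le_exp {x y : ℝ} (hx : 0 ≤ x) (hy : 0 ≤ y) (h : x ≤ exp y) : log x ≤ y := by
  rcases hx.eq_or_lt with rfl | hx
  · simpa using hy
  · exact (log_le_iff_le_exp hx).2 h

namespace ProbabilityTheory

lemma integral_exp_mul_binomial (n : ℕ) (p : I) (t : ℝ) :
    ∫ k, exp (t * k) ∂Bin(n, p) = (p * exp t + (1 - p)) ^ n := by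
  rw [integral_binomial, ← Nat.range_succ_eq_Iic, add_pow]
  refine sum_congr rfl fun k _ => ?_
  rw [smul_eq_mul, mul_comm t, exp_nat_mul, mul_pow]
  ring

lemma integral_exp_mul_binomial_le (n : ℕ) (p : I) (t : ℝ) :
    ∫ k, exp (t * k) ∂Bin(n, p) ≤ exp (n * (p * (exp t - 1))) := by
  have hp0 : (0 : ℝ) ≤ p := p.2.1
  have hp1 : (p : ℝ) ≤ 1 := p.2.2
  rw [integral_exp_mul_binomial, exp_nat_mul]
  refine pow_le_pow_left₀ (by nlinarith [exp_pos t]) ?_ n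
  calc (p : ℝ) * exp t + (1 - p) = p * (exp t - 1) + 1 := by ring
    _ ≤ exp (p * (exp t - 1)) := add_one_le_exp _

lemma binomial_compl_zero_le (n : ℕ) (p : I) : Bin(n, p) {0}ᶜ ≤ ENNReal.ofReal (n * p) := by
  rw [measure_compl (measurableSet_singleton 0) (measure_ne_top _ _), measure_univ,
    binomial_singleton, tsub_le_iff_right, ← ENNReal.ofReal_one]
  refine le_trans (ENNReal.ofReal_le_ofReal ?_) ENNReal.ofReal_add_le
  have := one_add_mul_sub_le_pow (a := 1 - (p : ℝ)) (by linarith [p.2.2]) n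
  simp only [Nat.choose_zero_right, Nat.cast_one, pow_zero, one_mul, Nat.sub_zero] at this ⊢
  linarith

variable {Ω : Type*} [MeasurableSpace Ω] {μ : Measure Ω}

lemma hasLaw_binomial_of_measure_eq {X : Ω → ℕ} (hX : Measurable X) {n : ℕ} {p : I}
    (h : ∀ k, μ {ω | X ω = k} = ENNReal.ofReal (n.choose k * p ^ k * (1 - p) ^ (n - k))) :
    HasLaw X Bin(n, p) μ where
  aemeasurable := hX.aemeasurable
  map_eq := Measure.ext_of_singleton fun k => by
    rw [Measure.map_apply hX (measurableSet_singleton k), binomial_singleton]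
    exact h k

lemma HasLaw.measure_ne_zero_le_of_binomial {X : Ω → ℕ} {n : ℕ} {p : I}
    (hX : HasLaw X Bin(n, p) μ) : μ {ω | X ω ≠ 0} ≤ ENNReal.ofReal (n * p) :=
  (hX.measure_eq (p := (· ≠ 0)) (measurableSet_singleton 0).compl).trans_le
    (binomial_compl_zero_le n p)

/-- Borel–Cantelli: almost surely only finitely many `f j ω` are nonzero. -/
lemma ae_summable_of_tsum_measure_ne_zero_ne_top {E : Type*} [AddCommMonoid E] [TopologicalSpace E]
    {f : ℕ → Ω → E} (h : ∑' j, μ {ω | f j ω ≠ 0} ≠ ∞) : ∀ᵐ ω ∂μ, Summable fun j => f j ω := by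
  filter_upwards [ae_eventually_notMem h] with ω hω
  obtain ⟨N, hN⟩ := eventually_atTop.1 hω
  exact summable_of_ne_finset_zero (s := range N) fun j hj => by
    simpa using hN j (by simpa using hj)

lemma tendsto_integral_exp_mul_sum_range [IsFiniteMeasure μ] {Y : ℕ → Ω → ℝ}
    (hY : ∀ j, AEMeasurable (Y j) μ) (hY0 : ∀ j ω, 0 ≤ Y j ω)
    (hsumm : ∀ᵐ ω ∂μ, Summable fun j => Y j ω) {t : ℝ} (ht : t ≤ 0) :
    Tendsto (fun m => ∫ ω, exp (t * ∑ j ∈ range m, Y j ω) ∂μ) atTop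
      (𝓝 (∫ ω, exp (t * ∑' j, Y j ω) ∂μ)) := by
  refine tendsto_integral_of_dominated_convergence (fun _ => 1) (fun m => ?_) (integrable_const 1)
    (fun m => ae_of_all _ fun ω => ?_) ?_
  · exact (measurable_exp.comp_aemeasurable
      ((Finset.aemeasurable_fun_sum _ fun j _ => hY j).const_mul t)).aestronglyMeasurable
  · rw [norm_of_nonneg (exp_pos _).le, exp_le_one_iff]
    exact mul_nonpos_of_nonpos_of_nonneg ht (sum_nonneg fun j _ => hY0 j ω)
  · filter_upwards [hsumm] with ω hω
    exact (continuous_exp.tendsto _).comp (hω.hasSum.tendsto_sum_nat.const_mul t)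

variable {X : ℕ → Ω → ℕ} {n : ℕ} {p : ℕ → I}

lemma integral_exp_mul_sum_range_le (hindep : iIndepFun X μ)
    (hX : ∀ j, HasLaw (X j) Bin(n, p j) μ) (t : ℝ) (m : ℕ) :
    ∫ ω, exp (t * ∑ j ∈ range m, (X j ω : ℝ)) ∂μ
      ≤ exp (n * (exp t - 1) * ∑ j ∈ range m, (p j : ℝ)) := by
  have hY : iIndepFun (fun j ω => (X j ω : ℝ)) μ := hindep.comp _ fun _ => measurable_from_nat
  have hmgf := hY.mgf_sum₀ (t := t)
    (fun j => measurable_from_nat.comp_aemeasurable (hX j).aemeasurable) (range m)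
  simp only [mgf, Finset.sum_apply] at hmgf
  have hfactor : ∀ j, mgf (fun ω => (X j ω : ℝ)) μ t ≤ exp (n * (p j * (exp t - 1))) := fun j => by
    rw [mgf]
    exact ((hX j).integral_comp (f := fun k : ℕ => exp (t * k)) .of_discrete).trans_le
      (integral_exp_mul_binomial_le n (p j) t)
  calc _ = ∏ j ∈ range m, mgf (fun ω => (X j ω : ℝ)) μ t := hmgf
    _ ≤ ∏ j ∈ range m, exp (n * (p j * (exp t - 1))) :=
      prod_le_prod (fun _ _ => mgf_nonneg) fun j _ => hfactor j
    _ = exp (n * (exp t - 1) * ∑ j ∈ range m, (p j : ℝ)) := by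
      rw [← exp_sum, mul_sum]
      exact congrArg exp (sum_congr rfl fun j _ => by ring)

theorem integral_exp_mul_tsum_le (hindep : iIndepFun X μ) (hX : ∀ j, HasLaw (X j) Bin(n, p j) μ)
    (hsum : Summable fun j => (p j : ℝ)) {t : ℝ} (ht : t ≤ 0) :
    ∫ ω, exp (t * ∑' j, (X j ω : ℝ)) ∂μ ≤ exp (n * (exp t - 1) * ∑' j, (p j : ℝ)) := by
  have := hindep.isProbabilityMeasure
  have hfin : ∑' j, μ {ω | (X j ω : ℝ) ≠ 0} ≠ ∞ := by
    refine ne_top_of_le_ne_top ?_ (ENNReal.tsum_le_tsum fun j => by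
      simpa only [ne_eq, Nat.cast_eq_zero] using (hX j).measure_ne_zero_le_of_binomial)
    rw [← ENNReal.ofReal_tsum_of_nonneg (fun j => mul_nonneg n.cast_nonneg (p j).2.1)
      (hsum.mul_left (n : ℝ))]
    exact ENNReal.ofReal_ne_top
  refine le_of_tendsto_of_tendsto'
    (tendsto_integral_exp_mul_sum_range
      (fun j => measurable_from_nat.comp_aemeasurable (hX j).aemeasurable)
      (fun j ω => Nat.cast_nonneg _) (ae_summable_of_tsum_measure_ne_zero_ne_top hfin) ht)
    ((continuous_exp.tendsto _).comp (hsum.hasSum.tendsto_sum_nat.const_mul _))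
    (integral_exp_mul_sum_range_le hindep hX t)

end ProbabilityTheory

theorem stmt_general
    {Ω : Type*} [MeasurableSpace Ω] (μ : Measure Ω)
    (p : ℕ → ℝ) (hp : ∀ j, p j ∈ Set.Ioo (0 : ℝ) 1) (hsum : Summable p)
    (n : ℕ) (X : ℕ → Ω → ℕ)
    (hmeas : ∀ j, Measurable (X j))
    (hindep : iIndepFun X μ)
    (hbin : ∀ j k, μ {ω | X j ω = k} =
      ENNReal.ofReal ((n.choose k : ℝ) * p j ^ k * (1 - p j) ^ (n - k)))
    (W : ℝ) (hW : ∑' j, p j = W) (hn : 1 ≤ n) :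
    ∀ lam : ℝ, 0 ≤ lam →
      Real.log (∫ ω, Real.exp (-lam * ((∑' j, (X j ω : ℝ)) / n - W)) ∂μ)
        ≤ lam ^ 2 * W / (2 * n) := by
  intro lam hlam
  have hn0 : (0 : ℝ) < n := by exact_mod_cast hn
  have hW0 : 0 ≤ W := hW ▸ tsum_nonneg fun j => (hp j).1.le
  let q : ℕ → I := fun j => ⟨p j, Set.Ioo_subset_Icc_self (hp j)⟩
  have hmgf := integral_exp_mul_tsum_le (p := q) hindep
    (fun j => hasLaw_binomial_of_measure_eq (hmeas j) (hbin j)) hsum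
    (t := -(lam / n)) (by simp only [neg_nonpos]; positivity)
  simp only [q, hW] at hmgf
  refine log_le_of_le_exp (integral_nonneg fun _ => (exp_pos _).le) (by positivity) ?_
  calc ∫ ω, exp (-lam * ((∑' j, (X j ω : ℝ)) / n - W)) ∂μ
      = exp (lam * W) * ∫ ω, exp (-(lam / n) * ∑' j, (X j ω : ℝ)) ∂μ := by
        rw [← integral_const_mul]
        congr 1 with ω
        rw [← exp_add]
        congr 1
        field_simp
        ring
    _ ≤ exp (lam * W) * exp (n * (exp (-(lam / n)) - 1) * W) := by gcongr
    _ = exp (n * W * (exp (-(lam / n)) - 1 + lam / n)) := by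
        rw [← exp_add]
        congr 1
        field_simp
        ring
    _ ≤ exp (n * W * ((lam / n) ^ 2 / 2)) := by
        gcongr
        exact exp_neg_sub_one_add_le (by positivity)
    _ = exp (lam ^ 2 * W / (2 * n)) := by
        congr 1
        field_simp

theorem stmt
    {Ω : Type*} [MeasurableSpace Ω] (μ : Measure Ω) [IsProbabilityMeasure μ]
    (p : ℕ → ℝ) (hp : ∀ j, p j ∈ Set.Ioo (0 : ℝ) 1) (hsum : Summable p)
    (n : ℕ) (X : ℕ → Ω → ℕ)
    (hmeas : ∀ j, Measurable (X j))
    (hindep : iIndepFun X μ)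
    (hbin : ∀ j k, μ {ω | X j ω = k} =
      ENNReal.ofReal ((n.choose k : ℝ) * p j ^ k * (1 - p j) ^ (n - k)))
    (W : ℝ) (hW : ∑' j, p j = W) (hn : 1 ≤ n) :
    ∀ lam : ℝ, 0 ≤ lam →
      Real.log (∫ ω, Real.exp (-lam * ((∑' j, (X j ω : ℝ)) / n - W)) ∂μ)
        ≤ lam ^ 2 * W / (2 * n) :=
  stmt_general μ p hp hsum n X hmeas hindep hbin W hW hn
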